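/- Let R be a commutative ℚ-algebra and A ∈ DG⁺CAlg(R). For each n, the n-fold composite σ⁰ ∘ σ⁰ ∘ … ∘ σ⁰ : DⁿA → A⁰ is a surjective R-algebra homomorphism whose kernel is n-nilpotent (its (n+1)-st power is zero). Consequently these maps assemble into a morphism DA → A⁰ of cosimplicial R-algebras (with constant cosimplicial structure on A⁰) which is a nilpotent extension in every cosimplicial level. -/

import Mathlib

open CategoryTheory

universe u

/-- A commutative differential graded algebra over `R` concentrated in non-negative
cochain degrees: a (not-necessarily-commutative) `R`-algebra with an `ℕ`-grading making
it a graded ring, which is graded-commutative (Koszul signs), together with a square-zero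
`R`-linear derivation `d` of cochain degree `+1`.  This is an object of `DG⁺CAlg(R)`. -/
structure DGCAlg (R : Type u) [CommRing R] : Type (u + 1) where
  carrier : Type u
  [ring : Ring carrier]
  [algebra : Algebra R carrier]
  grading : ℕ → Submodule R carrier
  [graded : GradedRing grading]
  gcomm : ∀ (i j : ℕ) (a b : carrier), a ∈ grading i → b ∈ grading j →
    a * b = ((-1 : ℤ) ^ (i * j)) • (b * a)
  d : carrier →ₗ[R] carrier
  d_mem : ∀ (i : ℕ) (a : carrier), a ∈ grading i → d a ∈ grading (i + 1)
  d_d : ∀ a, d (d a) = 0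
  leibniz : ∀ (i : ℕ) (a b : carrier), a ∈ grading i →
    d (a * b) = d a * b + ((-1 : ℤ) ^ i) • (a * d b)

attribute [instance] DGCAlg.ring DGCAlg.algebra DGCAlg.graded

variable {R : Type u} [CommRing R]

/-- Morphisms of non-negatively graded CDGAs: `R`-algebra homomorphisms preserving the
grading and commuting with the differentials. -/
@[ext]
structure DGCAlg.Hom (A B : DGCAlg R) where
  toAlgHom : A.carrier →ₐ[R] B.carrier
  map_grading : ∀ (i : ℕ) (a : A.carrier), a ∈ A.grading i → toAlgHom a ∈ B.grading i
  map_d : ∀ a, toAlgHom (A.d a) = B.d (toAlgHom a)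

instance : Category (DGCAlg R) where
  Hom A B := DGCAlg.Hom A B
  id A := ⟨AlgHom.id R A.carrier, fun _ _ h => h, fun _ => rfl⟩
  comp f g := ⟨g.toAlgHom.comp f.toAlgHom,
    fun i a h => g.map_grading i _ (f.map_grading i a h),
    fun a => by simp [AlgHom.comp_apply, f.map_d, g.map_d]⟩
  id_comp f := by apply DGCAlg.Hom.ext; rfl
  comp_id f := by apply DGCAlg.Hom.ext; rfl
  assoc f g h := by apply DGCAlg.Hom.ext; rfl

namespace DGCAlg

/-- A morphism of CDGAs is a square-zero extension if it is surjective in every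
(cochain) level and its kernel is a square-zero ideal. -/
def Hom.IsSquareZeroExtension {C' C : DGCAlg R} (p : DGCAlg.Hom C' C) : Prop :=
  (∀ i : ℕ, ∀ b ∈ C.grading i, ∃ a ∈ C'.grading i, p.toAlgHom a = b) ∧
    ∀ x y : C'.carrier, p.toAlgHom x = 0 → p.toAlgHom y = 0 → x * y = 0

/-- A square-zero extension is contractible if its kernel admits a `C'`-linear
contracting (cochain) homotopy. -/
def Hom.IsContractibleSquareZeroExtension {C' C : DGCAlg R} (p : DGCAlg.Hom C' C) : Prop :=
  p.IsSquareZeroExtension ∧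
    ∃ h : C'.carrier →ₗ[R] C'.carrier,
      (∀ x, p.toAlgHom x = 0 → p.toAlgHom (h x) = 0) ∧
      (∀ (i : ℕ) x, p.toAlgHom x = 0 → x ∈ C'.grading (i + 1) → h x ∈ C'.grading i) ∧
      (∀ x, p.toAlgHom x = 0 → x ∈ C'.grading 0 → h x = 0) ∧
      (∀ (i : ℕ) (a x : C'.carrier), a ∈ C'.grading i → p.toAlgHom x = 0 →
        h (a * x) = ((-1 : ℤ) ^ i) • (a * h x)) ∧
      (∀ x, p.toAlgHom x = 0 → C'.d (h x) + h (C'.d x) = x)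

end DGCAlg

/-- A natural transformation of set-valued functors on `DG⁺CAlg(R)` is formally étale if
it satisfies the (surjective) lifting condition against all square-zero extensions. -/
def FormallyEtaleNT {F G : DGCAlg R ⥤ Type u} (η : F ⟶ G) : Prop :=
  ∀ (C' C : DGCAlg R) (p : C' ⟶ C), DGCAlg.Hom.IsSquareZeroExtension p →
    ∀ (x : F.obj C) (y : G.obj C'), η.app C x = G.map p y →
      ∃ x' : F.obj C', F.map p x' = x ∧ η.app C' x' = y

/-- A natural transformation of set-valued functors on `DG⁺CAlg(R)` is formally geometric
if it satisfies the lifting condition against all contractible square-zero extensions. -/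
def FormallyGeometricNT {F G : DGCAlg R ⥤ Type u} (η : F ⟶ G) : Prop :=
  ∀ (C' C : DGCAlg R) (p : C' ⟶ C), DGCAlg.Hom.IsContractibleSquareZeroExtension p →
    ∀ (x : F.obj C) (y : G.obj C'), η.app C x = G.map p y →
      ∃ x' : F.obj C', F.map p x' = x ∧ η.app C' x' = y

/-- A natural transformation `η : F ⟶ G` of set-valued functors on `DG⁺CAlg(R)` is l.f.p.
if for every filtered colimit `C = colim_i C_i` the natural comparison map
`colim_i F(C_i) → colim_i G(C_i) ×_{G(C)} F(C)` is a bijection. -/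
def LFPNT {F G : DGCAlg R ⥤ Type u} (η : F ⟶ G) : Prop :=
  ∀ (I : Type u) (_ : SmallCategory I) (_ : IsFiltered I) (K : I ⥤ DGCAlg R)
    (c : Limits.Cocone K) (_ : Limits.IsColimit c),
    (∀ x y : Limits.colimit (K ⋙ F),
      Limits.colimMap (Functor.whiskerLeft K η) x = Limits.colimMap (Functor.whiskerLeft K η) y →
      Limits.colimit.desc (K ⋙ F) (F.mapCocone c) x =
        Limits.colimit.desc (K ⋙ F) (F.mapCocone c) y → x = y) ∧
    ∀ (yc : Limits.colimit (K ⋙ G)) (xF : F.obj c.pt),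
      Limits.colimit.desc (K ⋙ G) (G.mapCocone c) yc = η.app c.pt xF →
        ∃ x : Limits.colimit (K ⋙ F),
          Limits.colimMap (Functor.whiskerLeft K η) x = yc ∧
          Limits.colimit.desc (K ⋙ F) (F.mapCocone c) x = xF

/-- Étale natural transformations: formally étale and l.f.p. -/
def EtaleNT {F G : DGCAlg R ⥤ Type u} (η : F ⟶ G) : Prop :=
  FormallyEtaleNT η ∧ LFPNT η

/-- Geometric natural transformations: formally geometric and l.f.p. -/
def GeometricNT {F G : DGCAlg R ⥤ Type u} (η : F ⟶ G) : Prop :=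
  FormallyGeometricNT η ∧ LFPNT η

/-- The set-valued functor `Spec A` on `DG⁺CAlg(R)` represented by `A`. -/
def DGCAlg.Spec (A : DGCAlg R) : DGCAlg R ⥤ Type u := coyoneda.obj (Opposite.op A)

/-- The map `Spec B ⟶ Spec A` induced by a CDGA morphism `f : A ⟶ B`. -/
def DGCAlg.specMap {A B : DGCAlg R} (f : A ⟶ B) : B.Spec ⟶ A.Spec :=
  coyoneda.map f.op

/-- The unique natural transformation to the terminal (constant singleton) functor. -/
def toTerminalNT (F : DGCAlg R ⥤ Type u) : F ⟶ (Functor.const (DGCAlg R)).obj PUnit where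
  app _ := TypeCat.ofHom fun _ => PUnit.unit

/-- `Spec A` is a stacky affine if the map to the point is geometric. -/
def DGCAlg.IsStackyAffine (A : DGCAlg R) : Prop :=
  GeometricNT (toTerminalNT A.Spec)

/-- A morphism of CDGAs is étale if the induced map on `Spec` functors is étale. -/
def DGCAlg.Hom.IsEtale {A B : DGCAlg R} (f : A ⟶ B) : Prop := EtaleNT (DGCAlg.specMap f)

/-- A morphism of CDGAs is geometric if the induced map on `Spec` functors is geometric. -/
def DGCAlg.Hom.IsGeometric {A B : DGCAlg R} (f : A ⟶ B) : Prop :=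
  GeometricNT (DGCAlg.specMap f)

/-- The degree-zero part of a CDGA, as a commutative ring. -/
instance DGCAlg.commRingGradeZero (A : DGCAlg R) : CommRing (A.grading 0) :=
  { (inferInstance : Ring (A.grading 0)) with
    mul_comm := fun a b => Subtype.ext <| by
      have := A.gcomm 0 0 a.1 b.1 a.2 b.2
      simpa using this }

/-! ### Dold–Kan denormalisation and the Eilenberg–Zilber shuffle product -/

section Denorm

variable (A : DGCAlg R)

/-- The underlying `R`-module of the `n`-th level `DⁿA` of the denormalisation of `A`:
`DⁿA = ⊕_{J ⊆ {1,…,n}} ∂^J A^{n-|J|}`, encoded as functions on subsets `J` of `Fin n`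
(the subset `J` encodes the coface operators `∂^{j+1}` for `j ∈ J`). -/
def DObj (n : ℕ) : Type u := ∀ J : Finset (Fin n), A.grading (n - J.card)

instance (n : ℕ) : AddCommGroup (DObj A n) :=
  inferInstanceAs (AddCommGroup (∀ J : Finset (Fin n), A.grading (n - J.card)))
instance (n : ℕ) : Module R (DObj A n) :=
  inferInstanceAs (Module R (∀ J : Finset (Fin n), A.grading (n - J.card)))

/-- The basis inclusion of the summand `∂^J A^{n-|J|}` of `DⁿA`. -/
def DObj.single {n : ℕ} (J : Finset (Fin n)) (a : A.grading (n - J.card)) : DObj A n :=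
  Pi.single J a

variable {A}

/-- The sign `(-1)^{(S,T)}` of the shuffle permutation of `S ⊔ T` sending the first `|S|`
elements to `S` in order and the remaining `|T|` elements to `T` in order: `(-1)` to the
number of pairs `(s,t) ∈ S × T` with `t < s`. -/
def shuffleSign {n : ℕ} (S T : Finset (Fin n)) : ℤ :=
  (-1 : ℤ) ^ ((S ×ˢ T).filter (fun p => p.2 < p.1)).card

lemma grade_arith {n : ℕ} {I J : Finset (Fin n)} (h : I ∪ J = Finset.univ) :
    (n - I.card) + (n - J.card) = n - (I ∩ J).card := by
  have h1 : I.card ≤ n := by simpa using Finset.card_le_univ I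
  have h2 : J.card ≤ n := by simpa using Finset.card_le_univ J
  have h4 : (I ∩ J).card ≤ J.card := Finset.card_le_card Finset.inter_subset_right
  have h3 : n + (I ∩ J).card = I.card + J.card := by
    have := Finset.card_union_add_card_inter I J
    rw [h] at this
    simpa using this
  omega

lemma mul_mem_grade {n : ℕ} {I J : Finset (Fin n)} (h : I ∪ J = Finset.univ)
    {a b : A.carrier} (ha : a ∈ A.grading (n - I.card)) (hb : b ∈ A.grading (n - J.card)) :
    a * b ∈ A.grading (n - (I ∩ J).card) :=
  grade_arith h ▸ SetLike.GradedMul.mul_mem ha hb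

/-- The set `{j} ∪ δ_j(J)`, describing the effect of the coface operator `∂^{j+1}` on the
basis summand indexed by `J`. -/
def insertFace {n : ℕ} (j : Fin (n + 1)) (J : Finset (Fin n)) : Finset (Fin (n + 1)) :=
  insert j (J.image j.succAbove)

lemma insertFace_card {n : ℕ} (j : Fin (n + 1)) (J : Finset (Fin n)) :
    (insertFace j J).card = J.card + 1 := by
  have hj : j ∉ J.image j.succAbove := by
    simp only [Finset.mem_image]
    rintro ⟨a, -, ha⟩
    exact Fin.succAbove_ne j a ha
  rw [insertFace, Finset.card_insert_of_notMem hj,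
    Finset.card_image_of_injective _ Fin.succAbove_right_injective]

lemma insertFace_grade {n : ℕ} (j : Fin (n + 1)) (J : Finset (Fin n)) {v : A.carrier}
    (hv : v ∈ A.grading (n - J.card)) :
    v ∈ A.grading ((n + 1) - (insertFace j J).card) := by
  rwa [insertFace_card, Nat.succ_sub_succ]

variable (A)

/-- The structure of a cosimplicial commutative `R`-algebra on the Dold–Kan
denormalisation `n ↦ DⁿA` of `A ∈ DG⁺CAlg(R)`:
* a commutative `R`-algebra structure on each `DⁿA`, whose multiplication is given on
  the canonical basis by the Eilenberg–Zilber shuffle-product formula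
  `(∂^I a) ∇ (∂^J b) = ∂^{I∩J} (-1)^{(J∖I, I∖J)} (a·b)` if `I ∪ J = {1,…,n}`
  (equivalently `|a| = |J∖I|` and `|b| = |I∖J|`), and `0` otherwise;
* a functorial cosimplicial structure, all of whose operators are `R`-algebra
  homomorphisms, determined by the requirements that `σⁱ v = 0` for `v ∈ Aⁿ ⊆ DⁿA`,
  that `∂⁰ v = ∂v - Σ_{i=1}^{n+1} (-1)ⁱ ∂ⁱ v` for `v ∈ Aⁿ ⊆ DⁿA` (stated below as
  `Σ_{i=0}^{n+1} (-1)ⁱ ∂ⁱ v = ∂v`), and that the coface operators with positive index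
  act on the basis in the canonical way. -/
structure DenormalisationData : Type u where
  mul : ∀ n, DObj A n → DObj A n → DObj A n
  one : ∀ n, DObj A n
  mul_comm' : ∀ n x y, mul n x y = mul n y x
  mul_assoc' : ∀ n x y z, mul n (mul n x y) z = mul n x (mul n y z)
  one_mul' : ∀ n x, mul n (one n) x = x
  mul_add' : ∀ n x y z, mul n x (y + z) = mul n x y + mul n x z
  mul_smul' : ∀ n (r : R) x y, mul n x (r • y) = r • mul n x y
  one_def : ∀ n, one n = DObj.single A Finset.univ
    ⟨1, by simpa using SetLike.one_mem_graded A.grading⟩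
  mul_single : ∀ (n : ℕ) (I J : Finset (Fin n)) (a : A.grading (n - I.card))
    (b : A.grading (n - J.card)),
    mul n (DObj.single A I a) (DObj.single A J b) =
      if h : I ∪ J = Finset.univ then
        shuffleSign (J \ I) (I \ J) •
          DObj.single A (I ∩ J) ⟨(a : A.carrier) * b, mul_mem_grade h a.2 b.2⟩
      else 0
  map : ∀ {m n : SimplexCategory}, (m ⟶ n) → (DObj A m.len →ₗ[R] DObj A n.len)
  map_id : ∀ m : SimplexCategory, map (𝟙 m) = LinearMap.id
  map_comp : ∀ {m n k : SimplexCategory} (f : m ⟶ n) (g : n ⟶ k),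
    map (f ≫ g) = (map g).comp (map f)
  map_mul : ∀ {m n : SimplexCategory} (f : m ⟶ n) (x y : DObj A m.len),
    map f (mul m.len x y) = mul n.len (map f x) (map f y)
  map_one : ∀ {m n : SimplexCategory} (f : m ⟶ n), map f (one m.len) = one n.len
  σ_incl : ∀ (n : ℕ) (i : Fin (n + 1)) (v : A.grading (n + 1)),
    map (SimplexCategory.σ i) (DObj.single A (∅ : Finset (Fin (n + 1))) v) = 0
  δ_incl : ∀ (n : ℕ) (j : Fin (n + 2)) (hj : j ≠ 0) (J : Finset (Fin n))
    (v : A.grading (n - J.card)),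
    map (SimplexCategory.δ j) (DObj.single A J v) =
      DObj.single A (insertFace (j.pred hj) J) ⟨v, insertFace_grade _ J v.2⟩
  δ_alternating : ∀ (n : ℕ) (v : A.grading n),
    ∑ i : Fin (n + 2), ((-1 : ℤ) ^ (i : ℕ)) •
        map (SimplexCategory.δ i) (DObj.single A (∅ : Finset (Fin n)) v) =
      DObj.single A (∅ : Finset (Fin (n + 1))) ⟨A.d v, A.d_mem n v v.2⟩

end Denorm

/-- The `n`-fold composite `σ⁰ ∘ σ⁰ ∘ ⋯ ∘ σ⁰ : DⁿA → D⁰A`. -/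
def sigmaZeroComp {R : Type u} [CommRing R] {A : DGCAlg R}
    (D : DenormalisationData A) : ∀ n : ℕ, DObj A n →ₗ[R] DObj A 0
  | 0 => LinearMap.id
  | n + 1 => (sigmaZeroComp D n).comp (D.map (SimplexCategory.σ (0 : Fin (n + 1))))

/-- The `n`-fold composite `σ⁰ ∘ ⋯ ∘ σ⁰ : DⁿA → A⁰`, identifying `D⁰A` with `A⁰`. -/
def toZero {R : Type u} [CommRing R] {A : DGCAlg R} (D : DenormalisationData A)
    (n : ℕ) : DObj A n →ₗ[R] A.grading 0 :=
  (LinearMap.proj (∅ : Finset (Fin 0))).comp (sigmaZeroComp D n)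

/-!
There is only one map `⦋n⦌ ⟶ ⦋0⦌`, so `σ⁰ ∘ ⋯ ∘ σ⁰` is the operator it induces; hence it is
multiplicative and invariant under all cosimplicial operators. Every basis summand `∂^J v` of
`DⁿA` is the image of `v ∈ A^{n-|J|} ⊆ D^{n-|J|}A` under cofaces of positive index, and `σ⁰`
kills `Aᵐ ⊆ DᵐA` for `m > 0`. So `σ⁰ ∘ ⋯ ∘ σ⁰` reads off the component `J = {1,…,n}`, which
lies in `A⁰`.

The summand indexed by `J` sits in `A`-degree `n - |J|`, and the shuffle product adds
`A`-degrees. The kernel lives in `A`-degrees `≥ 1`, so a product of `n + 1` kernel elements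
lives in `A`-degrees `≥ n + 1`, where `DⁿA` is zero.
-/

open Simplicial

lemma Finset.sub_card_eq_zero_iff_eq_univ {n : ℕ} (J : Finset (Fin n)) :
    n - J.card = 0 ↔ J = Finset.univ := by
  rw [← Finset.card_eq_iff_eq_univ, Fintype.card_fin]
  have := J.card_le_univ
  rw [Fintype.card_fin] at this
  omega

section Denormalisation

variable {A : DGCAlg R} (D : DenormalisationData A)

lemma DObj.eq_sum_single {n : ℕ} (x : DObj A n) : x = ∑ J, DObj.single A J (x J) :=
  (Finset.univ_sum_single x).symm

lemma DObj.eq_single_empty (x : DObj A 0) : x = DObj.single A ∅ (x ∅) := by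
  funext J
  obtain rfl := Finset.eq_empty_of_isEmpty J
  rw [DObj.single, Pi.single_eq_same]

lemma DObj.single_zero {n : ℕ} (J : Finset (Fin n)) : DObj.single A J 0 = 0 :=
  Pi.single_zero J

lemma DObj.single_congr {n : ℕ} {J₁ J₂ : Finset (Fin n)} (h : J₁ = J₂) (v : A.carrier)
    (h₁ : v ∈ A.grading (n - J₁.card)) (h₂ : v ∈ A.grading (n - J₂.card)) :
    DObj.single A J₁ ⟨v, h₁⟩ = DObj.single A J₂ ⟨v, h₂⟩ := by
  subst h
  rfl

lemma DObj.coe_single_apply_of_eq {n : ℕ} {I K : Finset (Fin n)} (h : I = K)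
    (w : A.grading (n - I.card)) : (DObj.single A I w K : A.carrier) = w := by
  subst h
  rw [DObj.single, Pi.single_eq_same]

lemma sigmaZeroComp_eq_map (n : ℕ) (f : ⦋n⦌ ⟶ ⦋0⦌) : sigmaZeroComp D n = D.map f := by
  induction n with
  | zero =>
    rw [Subsingleton.elim f (𝟙 _), D.map_id]
    rfl
  | succ n ih =>
    rw [sigmaZeroComp, ih (⦋n⦌.const ⦋0⦌ 0), ← D.map_comp]
    exact congrArg D.map (Subsingleton.elim _ _)

lemma coe_toZero_apply {n : ℕ} (x : DObj A n) :
    (toZero D n x : A.carrier) = sigmaZeroComp D n x ∅ :=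
  rfl

lemma toZero_map {m n : ℕ} (f : ⦋m⦌ ⟶ ⦋n⦌) (x : DObj A m) :
    toZero D n (D.map f x) = toZero D m x := by
  refine Subtype.ext ?_
  rw [coe_toZero_apply, coe_toZero_apply, sigmaZeroComp_eq_map D n (⦋n⦌.const ⦋0⦌ 0),
    sigmaZeroComp_eq_map D m (f ≫ ⦋n⦌.const ⦋0⦌ 0), D.map_comp, LinearMap.comp_apply]

lemma coe_toZero_single_empty (m : ℕ) (v : A.grading (m - (∅ : Finset (Fin m)).card)) :
    (toZero D m (DObj.single A ∅ v) : A.carrier) = if m = 0 then (v : A.carrier) else 0 := by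
  cases m with
  | zero =>
    rw [if_pos rfl, coe_toZero_apply, sigmaZeroComp, LinearMap.id_apply, DObj.single,
      Pi.single_eq_same]
  | succ m =>
    rw [if_neg m.succ_ne_zero, coe_toZero_apply, sigmaZeroComp, LinearMap.comp_apply,
      D.σ_incl m 0 v, map_zero]
    rfl

lemma exists_insertFace_eq {n : ℕ} {J : Finset (Fin (n + 1))} (hJ : J.Nonempty) :
    ∃ (j : Fin (n + 1)) (J' : Finset (Fin n)), insertFace j J' = J := by
  obtain ⟨j, hj⟩ := hJ
  refine ⟨j, (J.erase j).preimage j.succAbove Fin.succAbove_right_injective.injOn, ?_⟩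
  ext a
  simp only [insertFace, Finset.mem_insert, Finset.mem_image, Finset.mem_preimage,
    Finset.mem_erase]
  constructor
  · rintro (rfl | ⟨b, ⟨-, hb⟩, rfl⟩)
    · exact hj
    · exact hb
  · intro ha
    by_cases h : a = j
    · exact Or.inl h
    · obtain ⟨b, rfl⟩ := Fin.exists_succAbove_eq h
      exact Or.inr ⟨b, ⟨h, ha⟩, rfl⟩

lemma exists_map_single_empty_eq_single {n m : ℕ} (J : Finset (Fin n)) (hJ : J.card + m = n)
    (v : A.carrier) (h₀ : v ∈ A.grading (m - (∅ : Finset (Fin m)).card))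
    (hv : v ∈ A.grading (n - J.card)) :
    ∃ g : ⦋m⦌ ⟶ ⦋n⦌, D.map g (DObj.single A ∅ ⟨v, h₀⟩) = DObj.single A J ⟨v, hv⟩ := by
  induction n with
  | zero =>
    obtain rfl := Finset.eq_empty_of_isEmpty J
    obtain rfl : m = 0 := by simpa using hJ
    exact ⟨𝟙 _, by rw [D.map_id]; rfl⟩
  | succ n ih =>
    rcases J.eq_empty_or_nonempty with rfl | hne
    · obtain rfl : m = n + 1 := by simpa using hJ
      exact ⟨𝟙 _, by rw [D.map_id]; rfl⟩
    · obtain ⟨j, J', hJ'⟩ := exists_insertFace_eq hne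
      have hcard : J'.card + 1 = J.card := by rw [← hJ', insertFace_card]
      obtain ⟨g, hg⟩ := ih J' (by omega) (by rwa [show n - J'.card = m by omega])
      refine ⟨g ≫ SimplexCategory.δ j.succ, ?_⟩
      rw [D.map_comp, LinearMap.comp_apply, hg, D.δ_incl n j.succ j.succ_ne_zero]
      exact DObj.single_congr (by rw [Fin.pred_succ, hJ']) v _ hv

lemma coe_toZero_single {n : ℕ} (J : Finset (Fin n)) (v : A.grading (n - J.card)) :
    (toZero D n (DObj.single A J v) : A.carrier) =
      if J = Finset.univ then (v : A.carrier) else 0 := by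
  have hJ : J.card ≤ n := by simpa using J.card_le_univ
  obtain ⟨g, hg⟩ := exists_map_single_empty_eq_single D J (m := n - J.card) (by omega) v
    (by simp [v.2]) v.2
  rw [← hg, toZero_map, coe_toZero_single_empty]
  exact if_congr J.sub_card_eq_zero_iff_eq_univ rfl rfl

lemma coe_toZero {n : ℕ} (x : DObj A n) : (toZero D n x : A.carrier) = x Finset.univ := by
  conv_lhs => rw [DObj.eq_sum_single x]
  rw [map_sum, AddSubmonoidClass.coe_finsetSum]
  simp_rw [coe_toZero_single]
  rw [Finset.sum_ite_eq' _ _ fun J => (x J : A.carrier), if_pos (Finset.mem_univ _)]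

theorem toZero_surjective (n : ℕ) : Function.Surjective (toZero D n) := fun b =>
  ⟨DObj.single A Finset.univ ⟨b, by simp [b.2]⟩,
    Subtype.ext ((coe_toZero D _).trans (DObj.coe_single_apply_of_eq rfl _))⟩

lemma coe_mul_apply_empty (x y : DObj A 0) :
    (D.mul 0 x y ∅ : A.carrier) = x ∅ * y ∅ := by
  conv_lhs => rw [DObj.eq_single_empty x, DObj.eq_single_empty y]
  have hsign : shuffleSign (∅ \ ∅ : Finset (Fin 0)) (∅ \ ∅) = 1 := by simp [shuffleSign]
  rw [D.mul_single, dif_pos (Subsingleton.elim _ _), hsign, one_smul]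
  exact DObj.coe_single_apply_of_eq (Subsingleton.elim _ _) _

theorem toZero_mul (n : ℕ) (x y : DObj A n) :
    toZero D n (D.mul n x y) = toZero D n x * toZero D n y := by
  let f : ⦋n⦌ ⟶ ⦋0⦌ := ⦋n⦌.const ⦋0⦌ 0
  rw [← toZero_map D f, ← toZero_map D f x, ← toZero_map D f y]
  refine Subtype.ext ?_
  rw [coe_toZero, D.map_mul f x y]
  exact coe_mul_apply_empty D _ _

theorem toZero_one (n : ℕ) : toZero D n (D.one n) = 1 := by
  refine Subtype.ext ?_
  rw [coe_toZero, D.one_def, DObj.coe_single_apply_of_eq rfl]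
  rfl

lemma DenormalisationData.mul_zero (n : ℕ) (x : DObj A n) : D.mul n x 0 = 0 := by
  simpa using D.mul_smul' n 0 x 0

lemma DenormalisationData.mul_sum {n : ℕ} {ι : Type*} (s : Finset ι) (x : DObj A n)
    (f : ι → DObj A n) : D.mul n x (∑ i ∈ s, f i) = ∑ i ∈ s, D.mul n x (f i) :=
  map_sum (AddMonoidHom.mk' (D.mul n x) (D.mul_add' n x)) f s

lemma DenormalisationData.mul_eq_sum_mul_single {n : ℕ} (x y : DObj A n) :
    D.mul n x y = ∑ I, ∑ J, D.mul n (DObj.single A I (x I)) (DObj.single A J (y J)) := by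
  conv_lhs => rw [DObj.eq_sum_single x, DObj.eq_sum_single y, D.mul_comm', D.mul_sum]
  refine Finset.sum_congr rfl fun I _ => ?_
  rw [D.mul_comm', D.mul_sum]

lemma DenormalisationData.mul_single_apply_of_ne {n : ℕ} {I J K : Finset (Fin n)}
    (a : A.grading (n - I.card)) (b : A.grading (n - J.card)) (hK : K ≠ I ∩ J) :
    D.mul n (DObj.single A I a) (DObj.single A J b) K = 0 := by
  rw [D.mul_single]
  split_ifs
  · exact (Pi.smul_apply _ _ K).trans ((congrArg _ (Pi.single_eq_of_ne hK _)).trans (smul_zero _))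
  · rfl

def DObj.VanishesBelow {n : ℕ} (x : DObj A n) (j : ℕ) : Prop :=
  ∀ J : Finset (Fin n), n - J.card < j → x J = 0

lemma DObj.VanishesBelow.mul {n j k : ℕ} {x y : DObj A n} (hx : x.VanishesBelow j)
    (hy : y.VanishesBelow k) : (D.mul n x y).VanishesBelow (j + k) := by
  intro K hK
  rw [D.mul_eq_sum_mul_single]
  refine (Finset.sum_apply K _ _).trans (Finset.sum_eq_zero fun I _ => ?_)
  refine (Finset.sum_apply K _ _).trans (Finset.sum_eq_zero fun J _ => ?_)
  by_cases hI : n - I.card < j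
  · rw [hx I hI, DObj.single_zero, D.mul_comm', D.mul_zero]
    rfl
  by_cases hJ : n - J.card < k
  · rw [hy J hJ, DObj.single_zero, D.mul_zero]
    rfl
  by_cases hIJ : I ∪ J = Finset.univ
  · refine D.mul_single_apply_of_ne _ _ fun hKIJ => ?_
    have := grade_arith hIJ
    subst hKIJ
    omega
  · rw [D.mul_single, dif_neg hIJ]
    rfl

lemma DObj.VanishesBelow.foldr_mul {n : ℕ} (l : List (DObj A n))
    (hl : ∀ x ∈ l, x.VanishesBelow 1) : (l.foldr (D.mul n) (D.one n)).VanishesBelow l.length := by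
  induction l with
  | nil => exact fun J hJ => absurd hJ (Nat.not_lt_zero _)
  | cons x l ih =>
    rw [List.foldr_cons, List.length_cons, add_comm]
    exact (hl x List.mem_cons_self).mul D (ih fun y hy => hl y (List.mem_cons_of_mem x hy))

lemma DObj.VanishesBelow.eq_zero {n j : ℕ} {x : DObj A n} (hx : x.VanishesBelow j) (hj : n < j) :
    x = 0 :=
  funext fun J => hx J (by omega)

lemma vanishesBelow_one_of_toZero_eq_zero {n : ℕ} {x : DObj A n} (hx : toZero D n x = 0) :
    x.VanishesBelow 1 := by
  intro J hJ
  obtain rfl := (Finset.sub_card_eq_zero_iff_eq_univ J).mp (by omega)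
  exact Subtype.ext ((coe_toZero D x).symm.trans (congrArg Subtype.val hx))

theorem foldr_mul_eq_zero_of_toZero_eq_zero {n : ℕ} (l : List (DObj A n)) (hl : n < l.length)
    (hker : ∀ x ∈ l, toZero D n x = 0) : l.foldr (D.mul n) (D.one n) = 0 :=
  (DObj.VanishesBelow.foldr_mul D l fun x hx =>
    vanishesBelow_one_of_toZero_eq_zero D (hker x hx)).eq_zero hl

end Denormalisation

theorem denormalisation_to_degree_zero_nilpotent_extension_general
    {R : Type u} [CommRing R] (A : DGCAlg R)
    (D : DenormalisationData A) :
    (∀ (n : ℕ) (b : A.grading 0), ∃ x : DObj A n, toZero D n x = b) ∧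
    (∀ (n : ℕ) (x y : DObj A n),
      toZero D n (D.mul n x y) = toZero D n x * toZero D n y) ∧
    (∀ n : ℕ, toZero D n (D.one n) = 1) ∧
    (∀ (n : ℕ) (x : Fin (n + 1) → DObj A n), (∀ k, toZero D n (x k) = 0) →
      (List.ofFn x).foldr (D.mul n) (D.one n) = 0) ∧
    (∀ (m k : SimplexCategory) (f : m ⟶ k) (x : DObj A m.len),
      toZero D k.len (D.map f x) = toZero D m.len x) := by
  refine ⟨toZero_surjective D, toZero_mul D, toZero_one D, fun n x hx => ?_,
    fun m k f x => toZero_map D f x⟩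
  refine foldr_mul_eq_zero_of_toZero_eq_zero D _ (by simp) fun y hy => ?_
  obtain ⟨k, rfl⟩ := List.mem_ofFn.mp hy
  exact hx k

/-- **(The map `DA → A⁰` is a levelwise nilpotent extension.)**
For `A ∈ DG⁺CAlg(R)` and each `n`, the `n`-fold composite
`σ⁰ ∘ ⋯ ∘ σ⁰ : DⁿA → A⁰` is a surjective `R`-algebra homomorphism whose kernel is
`n`-nilpotent (any product of `n+1` of its elements vanishes).  Consequently these maps
assemble into a morphism `DA → A⁰` of cosimplicial `R`-algebras (constant cosimplicial
structure on `A⁰`) which is a nilpotent extension in every cosimplicial level. -/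
theorem denormalisation_to_degree_zero_nilpotent_extension
    {R : Type u} [CommRing R] [Algebra ℚ R] (A : DGCAlg R)
    (D : DenormalisationData A) :
    (∀ (n : ℕ) (b : A.grading 0), ∃ x : DObj A n, toZero D n x = b) ∧
    (∀ (n : ℕ) (x y : DObj A n),
      toZero D n (D.mul n x y) = toZero D n x * toZero D n y) ∧
    (∀ n : ℕ, toZero D n (D.one n) = 1) ∧
    (∀ (n : ℕ) (x : Fin (n + 1) → DObj A n), (∀ k, toZero D n (x k) = 0) →
      (List.ofFn x).foldr (D.mul n) (D.one n) = 0) ∧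
    (∀ (m k : SimplexCategory) (f : m ⟶ k) (x : DObj A m.len),
      toZero D k.len (D.map f x) = toZero D m.len x) :=
  denormalisation_to_degree_zero_nilpotent_extension_general A D
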